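/- Let K : ℝ → (ℤ → ℝ) be the kernel K(x)_n = 2^{-n} χ_{(-2^n,0)}(x) − 2^{-(n-1)} χ_{(-2^{n-1},0)}(x), and fix 2 ≤ s < ∞ and 1 ≤ r < ∞. Then there is a constant C > 0 such that for all x > 0 and all integers l ≥ 2, letting S_l(x) = (2^l x, 2^{l+1} x), one has (∫_{S_l(x)} ‖K(x−y) − K(−y)‖_{ℓ^s}^r dy)^{1/r} ≤ C · 2^{−l/r} · |S_l(x)|^{−1/r'}, where 1/r + 1/r' = 1. In particular K satisfies the D_r condition with summable coefficients c_l = C 2^{−l/r}. -/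

import Mathlib

open MeasureTheory Set Real

/-- Indicator function of the open interval (a, b). -/
noncomputable def chi (a b : ℝ) : ℝ → ℝ := Set.indicator (Set.Ioo a b) (fun _ => 1)

/-- The sequence-valued kernel. -/
noncomputable def Kker (n : ℤ) (x : ℝ) : ℝ :=
  (2:ℝ)^(-n) * chi (-(2:ℝ)^n) 0 x - (2:ℝ)^(-(n-1)) * chi (-(2:ℝ)^(n-1)) 0 x

/-- The `ℓ^s` norm of a sequence indexed by `ℤ`. -/
noncomputable def lnorms (s : ℝ) (a : ℤ → ℝ) : ℝ := (∑' n : ℤ, |a n| ^ s) ^ (1/s)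

/-!
For `0 < x` and `2x ≤ y`, the difference `K(x - y)_n - K(-y)_n` equals
`2^{-n} δ_n - 2^{1-n} δ_{n-1}`, where `δ_k = 1` if `2^k ∈ (y - x, y]` and `0` otherwise.
As `y - x ≥ y / 2`, the only candidate is `k = ⌊log₂ y⌋`, so the difference is the dipole
`±2^{-k}` at `k, k + 1`, of `ℓ^s` norm at most `4 / y`, and it vanishes unless
`y < 2^{⌊log₂ y⌋} + x`. On `S_l(x) = (A, 2A)` with `A = 2^l x` this confines the integrand to
two intervals of length `x` starting at powers of two, so the integral of its `r`-th power is
at most `(4 / A)^r · 2x`, which gives the bound with `C = 8`.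
-/

lemma rpow_one_div_le_self {b s : ℝ} (hb : 1 ≤ b) (hs : 1 ≤ s) : b ^ (1/s) ≤ b :=
  rpow_le_self_of_one_le hb ((div_le_one (by linarith)).2 hs)

lemma lnorms_nonneg (s : ℝ) (a : ℤ → ℝ) : 0 ≤ lnorms s a :=
  rpow_nonneg (tsum_nonneg fun _ => rpow_nonneg (abs_nonneg _) _) _

lemma lnorms_zero {s : ℝ} (hs : 0 < s) : lnorms s 0 = 0 := by
  simp [lnorms, zero_rpow hs.ne', hs.ne']

lemma lnorms_single_sub_single {s : ℝ} (hs : 0 < s) {i j : ℤ} (hij : i ≠ j) (c : ℝ) :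
    lnorms s (Pi.single i c - Pi.single j c) = 2 ^ (1/s) * |c| := by
  have hsupp : ∀ n ∉ ({i, j} : Finset ℤ), |(Pi.single i c - Pi.single j c : ℤ → ℝ) n| ^ s = 0 := by
    intro n hn
    simp only [Finset.mem_insert, Finset.mem_singleton, not_or] at hn
    simp [hn.1, hn.2, zero_rpow hs.ne']
  rw [lnorms, tsum_eq_sum hsupp, Finset.sum_pair hij]
  simp only [Pi.sub_apply, Pi.single_eq_same, Pi.single_eq_of_ne hij, Pi.single_eq_of_ne hij.symm,
    sub_zero, zero_sub, abs_neg]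
  rw [← two_mul, mul_rpow zero_le_two (by positivity), ← rpow_mul (abs_nonneg c),
    mul_one_div_cancel hs.ne', rpow_one]

lemma ite_lt_sub_ite_lt {x y c : ℝ} (hx : 0 ≤ x) :
    ((if y - x < c then 1 else 0) - if y < c then 1 else 0 : ℝ) =
      if c ∈ Ioc (y - x) y then 1 else 0 := by
  simp only [mem_Ioc]
  grind

lemma chi_neg_zero_apply_neg {c t : ℝ} (ht : 0 < t) : chi (-c) 0 (-t) = if t < c then 1 else 0 := by
  simp [chi, indicator_apply, ht]

lemma Kker_neg {t : ℝ} (ht : 0 < t) (n : ℤ) :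
    Kker n (-t) = (2:ℝ)^(-n) * (if t < (2:ℝ)^n then 1 else 0)
      - (2:ℝ)^(-(n-1)) * (if t < (2:ℝ)^(n-1) then 1 else 0) := by
  simp only [Kker, chi_neg_zero_apply_neg ht]

lemma two_zpow_mem_Ioc_iff {x y : ℝ} (hy : 0 < y) (hxy : 2 * x ≤ y) (k : ℤ) :
    (2:ℝ)^k ∈ Ioc (y - x) y ↔ k = Int.log 2 y ∧ y - x < (2:ℝ)^(Int.log 2 y) := by
  have hle := Int.zpow_le_iff_le_log (b := 2) (R := ℝ) one_lt_two (x := k) hy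
  have hlt := Int.lt_zpow_iff_log_lt (b := 2) (R := ℝ) one_lt_two (x := k + 1) hy
  push_cast at hle hlt
  constructor
  · rintro ⟨hlo, hhi⟩
    have hk : k = Int.log 2 y := by
      have : y < (2:ℝ)^(k+1) := by rw [zpow_add_one₀ two_ne_zero]; linarith
      have := hle.1 hhi; have := hlt.1 ‹_›; omega
    exact ⟨hk, hk ▸ hlo⟩
  · rintro ⟨rfl, hlo⟩
    exact ⟨hlo, by simpa using Int.zpow_log_le_self (b := 2) one_lt_two hy⟩

lemma Kker_sub_Kker_eq {x y : ℝ} (hx : 0 < x) (hxy : 2 * x ≤ y) :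
    (fun n => Kker n (x - y) - Kker n (-y)) =
      if y - x < (2:ℝ)^(Int.log 2 y) then
        Pi.single (Int.log 2 y) ((2:ℝ)^(-Int.log 2 y))
          - Pi.single (Int.log 2 y + 1) ((2:ℝ)^(-Int.log 2 y))
      else 0 := by
  have hy : 0 < y := by linarith
  funext n
  rw [show x - y = -(y - x) by ring, Kker_neg (by linarith), Kker_neg hy, sub_sub_sub_comm,
    ← mul_sub, ← mul_sub, ite_lt_sub_ite_lt hx.le, ite_lt_sub_ite_lt hx.le]
  simp only [two_zpow_mem_Ioc_iff hy hxy]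
  set m := Int.log 2 y
  by_cases hm : y - x < (2:ℝ)^m
  · rcases eq_or_ne n m with rfl | hnm
    · simp [hm]
    rcases eq_or_ne n (m + 1) with rfl | hnm'
    · simp [hm]
    have : n - 1 ≠ m := by omega
    simp [hm, hnm, hnm', this]
  · simp [hm]

lemma lnorms_Kker_sub_le {s x y : ℝ} (hs : 1 ≤ s) (hx : 0 < x) (hxy : 2 * x ≤ y) :
    lnorms s (fun n => Kker n (x - y) - Kker n (-y)) ≤
      if y - x < (2:ℝ)^(Int.log 2 y) then 4 / y else 0 := by
  have hy : 0 < y := by linarith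
  rw [Kker_sub_Kker_eq hx hxy]
  split_ifs
  · set m := Int.log 2 y
    have hym : y < 2 * (2:ℝ)^m := by
      simpa [zpow_add_one₀, mul_comm] using Int.lt_zpow_succ_log_self (b := 2) one_lt_two y
    rw [lnorms_single_sub_single (by linarith) (by omega), abs_of_pos (by positivity), zpow_neg]
    calc (2:ℝ) ^ (1/s) * ((2:ℝ)^m)⁻¹ ≤ 2 * ((2:ℝ)^m)⁻¹ := by
          gcongr
          exact rpow_one_div_le_self one_le_two hs
      _ = 4 / (2 * (2:ℝ)^m) := by field_simp; norm_num
      _ ≤ 4 / y := by gcongr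
  · rw [lnorms_zero (by linarith)]

lemma Int.log_two_eq_or_eq_add_one_of_mem_Ioo {a y : ℝ} (ha : 0 < a) (hy : y ∈ Ioo a (2 * a)) :
    Int.log 2 y = Int.log 2 a ∨ Int.log 2 y = Int.log 2 a + 1 := by
  have hlo : Int.log 2 a ≤ Int.log 2 y := Int.log_mono_right ha hy.1.le
  have hhi : Int.log 2 y < Int.log 2 a + 2 := by
    have hya : y < (2:ℝ)^(Int.log 2 a + 2) := by
      have := Int.lt_zpow_succ_log_self (b := 2) (R := ℝ) one_lt_two a
      push_cast at this
      rw [zpow_add₀ two_ne_zero, zpow_two]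
      rw [zpow_add_one₀ two_ne_zero] at this
      nlinarith [hy.2]
    exact (Int.lt_zpow_iff_log_lt (b := 2) one_lt_two (hy.1.trans' ha)).1 (by exact_mod_cast hya)
  omega

def powTwoCollars (a x : ℝ) : Set ℝ :=
  Ico ((2:ℝ)^(Int.log 2 a)) ((2:ℝ)^(Int.log 2 a) + x) ∪
    Ico ((2:ℝ)^(Int.log 2 a + 1)) ((2:ℝ)^(Int.log 2 a + 1) + x)

lemma measurableSet_powTwoCollars (a x : ℝ) : MeasurableSet (powTwoCollars a x) :=
  measurableSet_Ico.union measurableSet_Ico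

lemma volume_real_powTwoCollars_le (a : ℝ) {x : ℝ} (hx : 0 ≤ x) :
    volume.real (powTwoCollars a x) ≤ 2 * x := by
  refine (measureReal_union_le _ _).trans_eq ?_
  rw [volume_real_Ico_of_le (by linarith), volume_real_Ico_of_le (by linarith)]
  ring

lemma lnorms_Kker_sub_rpow_le_indicator {s r a x y : ℝ} (hs : 1 ≤ s) (hr : 0 < r) (hx : 0 < x)
    (ha : 2 * x ≤ a) (hy : y ∈ Ioo a (2 * a)) :
    lnorms s (fun n => Kker n (x - y) - Kker n (-y)) ^ r ≤
      (powTwoCollars a x).indicator (fun _ => (4 / a) ^ r) y := by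
  have ha0 : 0 < a := by linarith
  have hle := lnorms_Kker_sub_le hs hx (ha.trans hy.1.le)
  split_ifs at hle with hnear
  · have hmem : y ∈ Ico ((2:ℝ)^(Int.log 2 y)) ((2:ℝ)^(Int.log 2 y) + x) :=
      ⟨by simpa using Int.zpow_log_le_self (b := 2) one_lt_two (ha0.trans hy.1), by linarith⟩
    rw [indicator_of_mem]
    · gcongr
      exacts [lnorms_nonneg _ _, hle.trans (div_le_div_of_nonneg_left (by norm_num) ha0 hy.1.le)]
    rcases Int.log_two_eq_or_eq_add_one_of_mem_Ioo ha0 hy with h | h <;> rw [h] at hmem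
    exacts [Or.inl hmem, Or.inr hmem]
  · rw [le_antisymm hle (lnorms_nonneg _ _), zero_rpow hr.ne']
    exact indicator_nonneg (fun _ _ => by positivity) y

lemma setIntegral_le_of_le_indicator_const {α : Type*} [MeasurableSpace α] {μ : Measure α}
    {f : α → ℝ} {s t : Set α} (hs : MeasurableSet s) (ht : MeasurableSet t) (hμt : μ t ≠ ⊤)
    {c : ℝ} (hc : 0 ≤ c) (hf0 : ∀ x ∈ s, 0 ≤ f x) (hf : ∀ x ∈ s, f x ≤ t.indicator (fun _ => c) x) :
    ∫ x in s, f x ∂μ ≤ c * μ.real t := by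
  have hint : Integrable (t.indicator fun _ => c) μ :=
    (integrable_indicator_iff ht).2 (integrableOn_const hμt)
  calc ∫ x in s, f x ∂μ ≤ ∫ x in s, t.indicator (fun _ => c) x ∂μ :=
        integral_mono_of_nonneg ((ae_restrict_iff' hs).2 (.of_forall hf0)) hint.integrableOn
          ((ae_restrict_iff' hs).2 (.of_forall hf))
    _ ≤ ∫ x, t.indicator (fun _ => c) x ∂μ :=
        setIntegral_le_integral hint (.of_forall fun x => indicator_nonneg (fun _ _ => hc) x)
    _ = c * μ.real t := by rw [integral_indicator_const c ht, smul_eq_mul, mul_comm]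

lemma rpow_one_div_div_zpow_mul {b r r' x : ℝ} (hb : 0 < b) (hx : 0 < x) (hrr' : 1/r + 1/r' = 1)
    (l : ℤ) : x ^ (1/r) / (b^l * x) = b ^ (-(l:ℝ)/r) * (b^l * x) ^ (-(1/r')) := by
  have hbl : 0 < b^l := zpow_pos hb l
  rw [show -(1/r') = 1/r - 1 by linarith, rpow_sub (by positivity), rpow_one,
    mul_rpow hbl.le hx.le, ← rpow_intCast, ← rpow_mul hb.le, mul_div_assoc, ← mul_assoc,
    ← rpow_add hb, show -(l:ℝ)/r + l * (1/r) = 0 by ring, rpow_zero, one_mul]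

/-- The kernel `K` satisfies the `D_r` condition, with the explicit coefficients
`c_l = C·2^{-l/r}` (which are summable).  Here `r'` is the conjugate exponent of `r`
(with the convention `r' = 0`, so `1/r' = 0`, when `r = 1`), and
`|S_l(x)| = 2^{l+1}x - 2^l x = 2^l x`. -/
theorem stmt3 (s r r' : ℝ) (hs : 2 ≤ s) (hr : 1 ≤ r) (hrr' : 1/r + 1/r' = 1) :
    ∃ C > 0, ∀ x : ℝ, 0 < x → ∀ l : ℤ, 2 ≤ l →
      (∫ y in Set.Ioo ((2:ℝ)^l * x) ((2:ℝ)^(l+1) * x),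
          lnorms s (fun n => Kker n (x - y) - Kker n (-y)) ^ r) ^ (1/r)
        ≤ C * (2:ℝ) ^ (-(l:ℝ)/r) * ((2:ℝ)^l * x) ^ (-(1/r')) := by
  have hr0 : 0 < r := by linarith
  refine ⟨8, by norm_num, fun x hx l hl => ?_⟩
  set A := (2:ℝ)^l * x
  have hA0 : 0 < A := by positivity
  have h2xA : 2 * x ≤ A := by
    have : (2:ℝ) ≤ 2^l := by simpa using zpow_le_zpow_right₀ one_le_two (by omega : (1:ℤ) ≤ l)
    nlinarith
  rw [show (2:ℝ)^(l+1) * x = 2 * A by rw [zpow_add_one₀ two_ne_zero]; ring]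
  set f := fun y => lnorms s (fun n => Kker n (x - y) - Kker n (-y)) ^ r
  have hf0 : ∀ y, 0 ≤ f y := fun y => rpow_nonneg (lnorms_nonneg _ _) r
  have hint : ∫ y in Ioo A (2 * A), f y ≤ (4 / A) ^ r * (2 * x) :=
    (setIntegral_le_of_le_indicator_const measurableSet_Ioo (measurableSet_powTwoCollars A x)
      (measure_union_lt_top measure_Ico_lt_top measure_Ico_lt_top).ne (by positivity)
      (fun y _ => hf0 y) fun y hy =>
        lnorms_Kker_sub_rpow_le_indicator (by linarith) hr0 hx h2xA hy).trans
      (by gcongr; exact volume_real_powTwoCollars_le A hx.le)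
  calc (∫ y in Ioo A (2 * A), f y) ^ (1/r)
      ≤ ((4 / A) ^ r * (2 * x)) ^ (1/r) := by gcongr; exact integral_nonneg hf0
    _ = 4 / A * 2 ^ (1/r) * x ^ (1/r) := by
      rw [mul_rpow (by positivity) (by positivity), ← rpow_mul (by positivity),
        mul_one_div_cancel hr0.ne', rpow_one, mul_rpow zero_le_two hx.le, mul_assoc]
    _ ≤ 4 / A * 2 * x ^ (1/r) := by gcongr; exact rpow_one_div_le_self one_le_two hr
    _ = 8 * (x ^ (1/r) / A) := by ring
    _ = 8 * (2:ℝ) ^ (-(l:ℝ)/r) * A ^ (-(1/r')) := by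
      rw [rpow_one_div_div_zpow_mul two_pos hx hrr', mul_assoc]
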